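/- Let φ be a C³ circle diffeomorphism, n a positive integer, and define the n-fold cover φₙ(z) = (φ(z))ⁿ on S¹. Then the Schwarzian derivatives satisfy S[φₙ](z) = ((1 − n²)/(2φ(z)²))·(φ'(z))² + S[φ](z), and consequently the n-th Schwarzian action satisfies I_Sch(φₙ) = I_Sch(φ) + ((1 − n²)/2)·∫₀^{2π} |φ'(e^{iθ})|² dθ, where I_Sch(ψ) = ∫₀^{2π} e^{2iθ} S[ψ](e^{iθ}) dθ. -/

import Mathlib

/-!
The `n`-fold cover is `(· ^ n) ∘ φ`, so the chain rule `S[g ∘ f] = (S[g] ∘ f) f'² + S[f]` reduces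
the pointwise formula to `S[wⁿ] = (1 - n²)/(2w²)`. For the action, differentiating
`|φ(e^{iθ})|² = 1` shows that `z φ'(z) / φ(z)` is real on the circle, so it is `±|φ'(z)|` (the
sign is the orientation of `φ`) and `z² φ'(z)² = |φ'(z)|² φ(z)²`. With `z = e^{iθ}` the extra
term of the integrand is therefore `(1 - n²)/2 · |φ'(e^{iθ})|²`.
-/

open Complex intervalIntegral

/-- The Schwarzian derivative `S[f] = (f''/f')' - (1/2)(f''/f')²`. -/
noncomputable def schwarzian (f : ℂ → ℂ) (z : ℂ) : ℂ :=
  deriv (fun w => deriv (deriv f) w / deriv f w) z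
    - (deriv (deriv f) z / deriv f z) ^ 2 / 2

open Filter Topology ComplexConjugate

noncomputable def preSchwarzian (f : ℂ → ℂ) (z : ℂ) : ℂ :=
  deriv (deriv f) z / deriv f z

section ChainRule

variable {f g : ℂ → ℂ} {z : ℂ}

theorem schwarzian_eq_preSchwarzian (f : ℂ → ℂ) (z : ℂ) :
    schwarzian f z = deriv (preSchwarzian f) z - preSchwarzian f z ^ 2 / 2 :=
  rfl

theorem AnalyticAt.preSchwarzian (hf : AnalyticAt ℂ f z) (hf' : deriv f z ≠ 0) :
    AnalyticAt ℂ (preSchwarzian f) z :=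
  hf.deriv.deriv.div hf.deriv hf'

theorem AnalyticAt.schwarzian (hf : AnalyticAt ℂ f z) (hf' : deriv f z ≠ 0) :
    AnalyticAt ℂ (schwarzian f) z :=
  (hf.preSchwarzian hf').deriv.sub ((hf.preSchwarzian hf').pow 2).div_const

theorem deriv_comp_eventuallyEq (hg : AnalyticAt ℂ g (f z)) (hf : AnalyticAt ℂ f z) :
    deriv (g ∘ f) =ᶠ[𝓝 z] fun w => deriv g (f w) * deriv f w := by
  filter_upwards [hf.eventually_analyticAt, hf.continuousAt.eventually hg.eventually_analyticAt]
    with w hfw hgw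
  exact deriv_comp w hgw.differentiableAt hfw.differentiableAt

theorem deriv_deriv_comp (hg : AnalyticAt ℂ g (f z)) (hf : AnalyticAt ℂ f z) :
    deriv (deriv (g ∘ f)) z
      = deriv (deriv g) (f z) * deriv f z ^ 2 + deriv g (f z) * deriv (deriv f) z := by
  have hg'f : DifferentiableAt ℂ (fun w => deriv g (f w)) z :=
    hg.deriv.differentiableAt.comp z hf.differentiableAt
  have hg''f : deriv (fun w => deriv g (f w)) z = deriv (deriv g) (f z) * deriv f z :=
    (hg.deriv.differentiableAt.hasDerivAt.comp z hf.differentiableAt.hasDerivAt).deriv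
  rw [(deriv_comp_eventuallyEq hg hf).deriv_eq,
    deriv_fun_mul hg'f hf.deriv.differentiableAt, hg''f]
  ring

theorem preSchwarzian_comp_eventuallyEq (hg : AnalyticAt ℂ g (f z)) (hf : AnalyticAt ℂ f z)
    (hg' : deriv g (f z) ≠ 0) (hf' : deriv f z ≠ 0) :
    preSchwarzian (g ∘ f) =ᶠ[𝓝 z]
      fun w => preSchwarzian g (f w) * deriv f w + preSchwarzian f w := by
  have hg'f : ContinuousAt (fun w => deriv g (f w)) z :=
    hg.deriv.continuousAt.comp hf.continuousAt
  filter_upwards [hf.eventually_analyticAt, hf.continuousAt.eventually hg.eventually_analyticAt,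
    hf.deriv.continuousAt.eventually_ne hf', hg'f.eventually_ne hg'] with w hfw hgw hf'w hg'w
  rw [preSchwarzian, preSchwarzian, preSchwarzian, deriv_deriv_comp hgw hfw,
    deriv_comp w hgw.differentiableAt hfw.differentiableAt]
  field_simp

theorem schwarzian_comp (hg : AnalyticAt ℂ g (f z)) (hf : AnalyticAt ℂ f z)
    (hg' : deriv g (f z) ≠ 0) (hf' : deriv f z ≠ 0) :
    schwarzian (g ∘ f) z = schwarzian g (f z) * deriv f z ^ 2 + schwarzian f z := by
  have hPg : DifferentiableAt ℂ (fun w => preSchwarzian g (f w)) z :=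
    (hg.preSchwarzian hg').differentiableAt.comp z hf.differentiableAt
  have hPf := (hf.preSchwarzian hf').differentiableAt
  have hcomp := preSchwarzian_comp_eventuallyEq hg hf hg' hf'
  have hPg' : deriv (fun w => preSchwarzian g (f w)) z
      = deriv (preSchwarzian g) (f z) * deriv f z :=
    ((hg.preSchwarzian hg').differentiableAt.hasDerivAt.comp z hf.differentiableAt.hasDerivAt).deriv
  rw [schwarzian_eq_preSchwarzian, hcomp.deriv_eq, hcomp.eq_of_nhds,
    deriv_fun_add (hPg.fun_mul hf.deriv.differentiableAt) hPf,
    deriv_fun_mul hPg hf.deriv.differentiableAt, hPg',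
    schwarzian_eq_preSchwarzian, schwarzian_eq_preSchwarzian]
  unfold preSchwarzian
  field_simp
  ring

end ChainRule

theorem preSchwarzian_pow_eventuallyEq (n : ℕ) {z : ℂ} (hz : z ≠ 0) :
    preSchwarzian (fun w => w ^ (n + 1)) =ᶠ[𝓝 z] fun w => n / w := by
  have hd : deriv (fun w : ℂ => w ^ (n + 1)) = fun w => ((n : ℂ) + 1) * w ^ n := by
    funext w
    simp
  filter_upwards [eventually_ne_nhds hz] with w hw
  simp only [preSchwarzian, hd, deriv_const_mul_field', deriv_pow_field, Nat.cast_add, Nat.cast_one,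
    Nat.add_sub_cancel]
  have hn : (n : ℂ) + 1 ≠ 0 := by exact_mod_cast n.succ_ne_zero
  rw [mul_div_mul_left _ _ hn]
  rcases n with _ | m
  · simp
  · simp only [Nat.add_sub_cancel]
    field_simp
    ring

theorem schwarzian_pow {n : ℕ} (hn : n ≠ 0) {z : ℂ} (hz : z ≠ 0) :
    schwarzian (fun w => w ^ n) z = (1 - (n : ℂ) ^ 2) / (2 * z ^ 2) := by
  obtain ⟨m, rfl⟩ := Nat.exists_eq_succ_of_ne_zero hn
  have hP := preSchwarzian_pow_eventuallyEq m hz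
  rw [schwarzian_eq_preSchwarzian, hP.deriv_eq, hP.eq_of_nhds, deriv_const_div _
    differentiableAt_id hz, deriv_id'']
  push_cast
  field_simp
  ring

theorem schwarzian_pow_comp {n : ℕ} (hn : n ≠ 0) {f : ℂ → ℂ} {z : ℂ} (hf : AnalyticAt ℂ f z)
    (hf0 : f z ≠ 0) (hf' : deriv f z ≠ 0) :
    schwarzian (fun w => f w ^ n) z
      = (1 - (n : ℂ) ^ 2) / (2 * f z ^ 2) * deriv f z ^ 2 + schwarzian f z := by
  have hpow : deriv (fun w => w ^ n) (f z) ≠ 0 := by simp [hn, hf0]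
  rw [← Function.comp_def (fun w => w ^ n) f, schwarzian_comp (by fun_prop) hf hpow hf',
    schwarzian_pow hn hf0]

theorem hasDerivAt_exp_ofReal_mul_I (θ : ℝ) :
    HasDerivAt (fun t : ℝ => exp (t * I)) (exp (θ * I) * I) θ := by
  simpa using ((ofRealCLM.hasDerivAt (x := θ)).mul_const I).cexp

theorem sq_mul_deriv_sq_of_mapsTo_circle {f : ℂ → ℂ} {z : ℂ} (hz : ‖z‖ = 1)
    (hf : DifferentiableAt ℂ f z) (hmap : ∀ w : ℂ, ‖w‖ = 1 → ‖f w‖ = 1) :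
    z ^ 2 * deriv f z ^ 2 = (‖deriv f z‖ ^ 2 : ℝ) * f z ^ 2 := by
  obtain ⟨θ, rfl⟩ : ∃ θ : ℝ, exp (θ * I) = z :=
    ⟨arg z, by simpa [hz] using norm_mul_exp_arg_mul_I z⟩
  set z := exp (θ * I)
  have hnorm_sq : (fun t : ℝ => ‖f (exp (t * I))‖ ^ 2) = fun _ => 1 := by
    funext t
    rw [hmap _ (norm_exp_ofReal_mul_I t), one_pow]
  have hderiv : HasDerivAt (fun t : ℝ => ‖f (exp (t * I))‖ ^ 2)
      (2 * inner ℝ (f z) (deriv f z * (z * I))) θ :=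
    (hf.hasDerivAt.comp θ (hasDerivAt_exp_ofReal_mul_I θ)).norm_sq
  rw [hnorm_sq] at hderiv
  set u := z * deriv f z * conj (f z)
  have horth : u.im = 0 := by
    have h := hderiv.unique (hasDerivAt_const θ 1)
    rw [Complex.inner, show deriv f z * (z * I) * conj (f z) = I * u by ring, I_mul_re] at h
    linarith
  have hu : u ^ 2 = (‖deriv f z‖ ^ 2 : ℝ) := by
    rw [sq]
    nth_rewrite 2 [← conj_eq_iff_im.mpr horth]
    rw [mul_conj']
    simp [u, hz, hmap z hz]
  have hP : f z * conj (f z) = 1 := by simp [mul_conj', hmap z hz]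
  linear_combination f z ^ 2 * hu - z ^ 2 * deriv f z ^ 2 * (f z * conj (f z) + 1) * hP

theorem continuous_comp_exp_ofReal_mul_I {g : ℂ → ℂ} (hg : ∀ w : ℂ, ‖w‖ = 1 → ContinuousAt g w) :
    Continuous fun θ : ℝ => g (exp (θ * I)) :=
  continuous_iff_continuousAt.mpr fun θ =>
    (hg _ (norm_exp_ofReal_mul_I θ)).comp (f := fun t : ℝ => exp (t * I))
      (hasDerivAt_exp_ofReal_mul_I θ).continuousAt

/-- For a circle diffeomorphism `φ` (holomorphic near the circle, mapping the unit circle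
to itself with nonvanishing derivative) and its `n`-fold cover `φₙ(z) = (φ z)ⁿ`:
`S[φₙ] = ((1−n²)/(2φ²))(φ')² + S[φ]` on the circle, and hence
`I_Sch(φₙ) = I_Sch(φ) + ((1−n²)/2)·∫₀^{2π}|φ'(e^{iθ})|² dθ`. -/
theorem schwarzian_n_fold_cover (φ : ℂ → ℂ) (n : ℕ) (hn : 0 < n)
    (hφ : ∀ w : ℂ, ‖w‖ = 1 → AnalyticAt ℂ φ w)
    (hmap : ∀ w : ℂ, ‖w‖ = 1 → ‖φ w‖ = 1)
    (hd : ∀ w : ℂ, ‖w‖ = 1 → deriv φ w ≠ 0) :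
    (∀ z : ℂ, ‖z‖ = 1 →
        schwarzian (fun w => (φ w) ^ n) z
          = ((1 - (n : ℂ) ^ 2) / (2 * (φ z) ^ 2)) * (deriv φ z) ^ 2 + schwarzian φ z)
    ∧ (∫ θ in (0:ℝ)..(2 * Real.pi),
          Complex.exp (2 * θ * I) * schwarzian (fun w => (φ w) ^ n) (Complex.exp (θ * I)))
        = (∫ θ in (0:ℝ)..(2 * Real.pi),
            Complex.exp (2 * θ * I) * schwarzian φ (Complex.exp (θ * I)))
          + ((1 - (n : ℂ) ^ 2) / 2)
            * ((∫ θ in (0:ℝ)..(2 * Real.pi),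
                ‖deriv φ (Complex.exp (θ * I))‖ ^ 2 : ℝ) : ℂ) := by
  have hφ0 : ∀ z : ℂ, ‖z‖ = 1 → φ z ≠ 0 := fun z hz h0 => by simpa [h0] using hmap z hz
  have hcover : ∀ z : ℂ, ‖z‖ = 1 → schwarzian (fun w => (φ w) ^ n) z
      = ((1 - (n : ℂ) ^ 2) / (2 * (φ z) ^ 2)) * (deriv φ z) ^ 2 + schwarzian φ z :=
    fun z hz => schwarzian_pow_comp hn.ne' (hφ z hz) (hφ0 z hz) (hd z hz)
  refine ⟨hcover, ?_⟩
  have hintegrand : ∀ θ : ℝ, exp (2 * θ * I) * schwarzian (fun w => (φ w) ^ n) (exp (θ * I))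
      = exp (2 * θ * I) * schwarzian φ (exp (θ * I))
        + (1 - (n : ℂ) ^ 2) / 2 * (‖deriv φ (exp (θ * I))‖ ^ 2 : ℝ) := by
    intro θ
    have hz := norm_exp_ofReal_mul_I θ
    have hsq := sq_mul_deriv_sq_of_mapsTo_circle hz (hφ _ hz).differentiableAt hmap
    rw [hcover _ hz,
      show exp (2 * θ * I) = exp (θ * I) ^ 2 by rw [← exp_nat_mul]; push_cast; ring_nf]
    field_simp [hφ0 _ hz]
    linear_combination (1 - (n : ℂ) ^ 2) * hsq
  have hS : Continuous fun θ : ℝ => schwarzian φ (exp (θ * I)) :=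
    continuous_comp_exp_ofReal_mul_I fun w hw => ((hφ w hw).schwarzian (hd w hw)).continuousAt
  have hφ' : Continuous fun θ : ℝ => deriv φ (exp (θ * I)) :=
    continuous_comp_exp_ofReal_mul_I fun w hw => (hφ w hw).deriv.continuousAt
  rw [integral_congr fun θ _ => hintegrand θ, integral_add, integral_const_mul,
    intervalIntegral.integral_ofReal]
  · exact (by fun_prop : Continuous fun θ : ℝ => exp (2 * θ * I)).mul hS |>.intervalIntegrable _ _
  · exact (continuous_const.mul (continuous_ofReal.comp (hφ'.norm.pow 2))).intervalIntegrable _ _
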